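/- arXiv:2304.00526 — 5 statements merged into one kernel-verified Lean document; each statement's English description precedes it below -/
import Mathlib

section
/- Let α > 0, β > 0, γ > 0 and λ ≥ 0. Then for every real s > 0 with s^α > λ, the Laplace transform of the Prabhakar kernel satisfies ∫_0^∞ e^{−s x} x^{β−1} E^γ_{α,β}(−λ x^α) dx = s^{αγ−β} / (λ + s^α)^γ. -/
/-!
Expanding `E^γ_{α,β}` into its power series and integrating term by term with
`∫₀^∞ t^(a-1) e^(-s t) dt = Γ(a) / s^a` turns the Laplace transform into
`s^(-β) Σ_k Γ(γ+k)/(Γ(γ) k!) (-λ/s^α)^k`, a binomial series which sums to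
`s^(-β) (1 + λ/s^α)^(-γ)`. The condition `λ < s^α` makes the binomial series converge
absolutely, which is what justifies the termwise integration.
-/

open MeasureTheory Real

/-- Riemann–Liouville fractional integral of order `ν > 0`. -/
noncomputable def RL (ν : ℝ) (f : ℝ → ℝ) (x : ℝ) : ℝ :=
  (1 / Real.Gamma ν) * ∫ u in (0:ℝ)..x, (x - u) ^ (ν - 1) * f u

/-- Conditional stable density at scale `t`: `f_α(x|t) = t^{-1/α} f_α(x t^{-1/α})`. -/
noncomputable def condStable (α : ℝ) (f : ℝ → ℝ) (t : ℝ) (x : ℝ) : ℝ :=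
  t ^ (-(1/α)) * f (x * t ^ (-(1/α)))

/-- Three-parameter Mittag-Leffler (Prabhakar) function `E^γ_{α,β}(z)`. -/
noncomputable def prabhakar (α β γ : ℝ) (z : ℝ) : ℝ :=
  (1 / Real.Gamma γ) *
    ∑' k : ℕ, Real.Gamma (γ + k) * z ^ k / ((k.factorial : ℝ) * Real.Gamma (α * k + β))

/-- One-parameter Mittag-Leffler function `E_α(z)`. -/
noncomputable def mittagLeffler (α : ℝ) (z : ℝ) : ℝ :=
  ∑' k : ℕ, z ^ k / Real.Gamma (α * k + 1)

namespace Real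

theorem Gamma_add_nat_eq_mul_ascPochhammer {γ : ℝ} (hγ : ∀ k : ℕ, γ ≠ -k) (n : ℕ) :
    Gamma (γ + n) = Gamma γ * (ascPochhammer ℝ n).eval γ := by
  induction n with
  | zero => simp
  | succ n ih =>
    have hne : γ + n ≠ 0 := fun h => hγ n (by linarith)
    rw [ascPochhammer_succ_right, Polynomial.eval_mul, Nat.cast_succ, ← add_assoc,
      Gamma_add_one hne, ih]
    simp only [Polynomial.eval_add, Polynomial.eval_X, Polynomial.eval_natCast]
    ring

theorem Gamma_add_nat_eq_mul_factorial_mul_choose {γ : ℝ} (hγ : ∀ k : ℕ, γ ≠ -k) (n : ℕ) :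
    Gamma (γ + n) = Gamma γ * n.factorial * Ring.choose (γ + n - 1) n := by
  rw [← Ring.multichoose_eq, Gamma_add_nat_eq_mul_ascPochhammer hγ, mul_assoc, ← nsmul_eq_mul,
    Ring.factorial_nsmul_multichoose_eq_ascPochhammer, Polynomial.ascPochhammer_smeval_eq_eval]

end Real

theorem hasSum_choose_mul_pow (γ : ℝ) {x : ℝ} (hx : |x| < 1) :
    HasSum (fun n : ℕ => Ring.choose (γ + n - 1) n * x ^ n) (1 / (1 - x) ^ γ) := by
  simpa [FormalMultilinearSeries.ofScalars] using
    (one_div_one_sub_rpow_hasFPowerSeriesOnBall_zero γ).hasSum (y := x)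
      (by simpa [enorm_eq_nnnorm, ← NNReal.coe_lt_one] using hx)

theorem hasSum_Gamma_add_mul_pow_div_factorial {γ x : ℝ} (hγ : ∀ k : ℕ, γ ≠ -k)
    (hx : |x| < 1) :
    HasSum (fun n : ℕ => Gamma (γ + n) * x ^ n / n.factorial) (Gamma γ / (1 - x) ^ γ) := by
  have hterm (n : ℕ) : Gamma (γ + n) * x ^ n / n.factorial
      = Gamma γ * (Ring.choose (γ + n - 1) n * x ^ n) := by
    rw [Gamma_add_nat_eq_mul_factorial_mul_choose hγ]
    field_simp
  simpa only [hterm, mul_one_div] using (hasSum_choose_mul_pow γ hx).mul_left (Gamma γ)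

theorem integral_tsum_mul_rpow_mul_exp_neg_mul_Ioi {c a : ℕ → ℝ} {s : ℝ} (ha : ∀ k, 0 < a k)
    (hs : 0 < s) (hsum : Summable fun k => |c k| * ((1 / s) ^ a k * Gamma (a k))) :
    ∫ t in Set.Ioi 0, ∑' k, c k * (t ^ (a k - 1) * exp (-(s * t)))
      = ∑' k, c k * ((1 / s) ^ a k * Gamma (a k)) := by
  have hint (k : ℕ) : IntegrableOn (fun t => t ^ (a k - 1) * exp (-(s * t))) (Set.Ioi 0) := by
    simpa using integrableOn_rpow_mul_exp_neg_mul_rpow (p := 1) (s := a k - 1) (b := s)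
      (by linarith [ha k]) one_pos hs
  have hnorm (k : ℕ) : ∫ t in Set.Ioi 0, ‖c k * (t ^ (a k - 1) * exp (-(s * t)))‖
      = |c k| * ((1 / s) ^ a k * Gamma (a k)) := by
    rw [← integral_rpow_mul_exp_neg_mul_Ioi (ha k) hs, ← integral_const_mul]
    refine setIntegral_congr_fun measurableSet_Ioi fun t (ht : 0 < t) => ?_
    rw [norm_mul, Real.norm_eq_abs, Real.norm_of_nonneg (by positivity)]
  rw [← integral_tsum_of_summable_integral_norm (fun k => (hint k).const_mul (c k))
    (hsum.congr fun k => (hnorm k).symm)]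
  simp_rw [integral_const_mul, integral_rpow_mul_exp_neg_mul_Ioi (ha _) hs]

noncomputable def prabhakarCoeff (α β γ : ℝ) (k : ℕ) : ℝ :=
  Gamma (γ + k) / (k.factorial * Gamma (α * k + β) * Gamma γ)

theorem prabhakarCoeff_nonneg {α β γ : ℝ} (hα : 0 ≤ α) (hβ : 0 < β) (hγ : 0 < γ) (k : ℕ) :
    0 ≤ prabhakarCoeff α β γ k := by
  have hΓ : 0 < Gamma (α * k + β) := Gamma_pos_of_pos (by positivity)
  have hΓk : 0 < Gamma (γ + k) := Gamma_pos_of_pos (by positivity)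
  have hΓγ : 0 < Gamma γ := Gamma_pos_of_pos hγ
  unfold prabhakarCoeff
  positivity

theorem rpow_mul_prabhakar_mul_rpow (α β γ z : ℝ) {t : ℝ} (ht : 0 < t) :
    t ^ (β - 1) * prabhakar α β γ (z * t ^ α)
      = ∑' k : ℕ, prabhakarCoeff α β γ k * z ^ k * t ^ (α * k + β - 1) := by
  rw [prabhakar, ← mul_assoc, ← tsum_mul_left]
  refine tsum_congr fun k => ?_
  rw [prabhakarCoeff, mul_pow, ← rpow_natCast (t ^ α), ← rpow_mul ht.le, add_sub_assoc,
    rpow_add ht]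
  ring

theorem prabhakarCoeff_mul_pow_mul_one_div_rpow_mul_Gamma (α β γ z : ℝ) (k : ℕ) {s : ℝ} (hs : 0 < s)
    (hΓ : Gamma (α * k + β) ≠ 0) :
    prabhakarCoeff α β γ k * z ^ k * ((1 / s) ^ (α * k + β) * Gamma (α * k + β))
      = (1 / s) ^ β / Gamma γ * (Gamma (γ + k) * (z / s ^ α) ^ k / k.factorial) := by
  have hsα : 0 < s ^ α := rpow_pos_of_pos hs α
  rw [prabhakarCoeff, rpow_add (by positivity), rpow_mul (by positivity), rpow_natCast,
    div_rpow zero_le_one hs.le, one_rpow, div_pow, div_pow, one_pow]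
  generalize Gamma (α * k + β) = G at hΓ ⊢
  field_simp

theorem stmt_4 (α β γ : ℝ) (hα : 0 < α) (hβ : 0 < β) (hγ : 0 < γ)
    (lam : ℝ) (hlam : 0 ≤ lam) :
    ∀ s > (0:ℝ), lam < s ^ α →
      (∫ x in Set.Ioi (0:ℝ),
          Real.exp (-(s * x)) * (x ^ (β - 1) * prabhakar α β γ (-(lam * x ^ α))))
        = s ^ (α * γ - β) / (lam + s ^ α) ^ γ := by
  intro s hs hlam_lt
  have hsα : 0 < s ^ α := by positivity
  have hβk (k : ℕ) : 0 < α * k + β := by positivity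
  have hΓ (k : ℕ) : Gamma (α * k + β) ≠ 0 := (Gamma_pos_of_pos (hβk k)).ne'
  have hγk (k : ℕ) : γ ≠ -k := by linarith [k.cast_nonneg (α := ℝ)]
  have hr : |lam / s ^ α| < 1 := by rwa [abs_of_nonneg (by positivity), div_lt_one hsα]
  have hexpand : ∀ x ∈ Set.Ioi (0:ℝ),
      exp (-(s * x)) * (x ^ (β - 1) * prabhakar α β γ (-(lam * x ^ α)))
        = ∑' k : ℕ, prabhakarCoeff α β γ k * (-lam) ^ k
            * (x ^ (α * k + β - 1) * exp (-(s * x))) := fun x hx => by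
    rw [← neg_mul lam, rpow_mul_prabhakar_mul_rpow α β γ (-lam) hx, ← tsum_mul_left]
    exact tsum_congr fun k => by ring
  rw [setIntegral_congr_fun measurableSet_Ioi hexpand,
    integral_tsum_mul_rpow_mul_exp_neg_mul_Ioi hβk hs ?summable]
  case summable =>
    simp_rw [abs_mul, abs_of_nonneg (prabhakarCoeff_nonneg hα.le hβ hγ _), abs_pow, abs_neg,
      abs_of_nonneg hlam, prabhakarCoeff_mul_pow_mul_one_div_rpow_mul_Gamma α β γ _ _ hs (hΓ _)]
    exact (hasSum_Gamma_add_mul_pow_div_factorial hγk hr).summable.mul_left _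
  simp_rw [prabhakarCoeff_mul_pow_mul_one_div_rpow_mul_Gamma α β γ _ _ hs (hΓ _)]
  rw [tsum_mul_left, (hasSum_Gamma_add_mul_pow_div_factorial hγk (x := -lam / s ^ α)
      (by rwa [neg_div, abs_neg])).tsum_eq,
    one_sub_div hsα.ne', sub_neg_eq_add, add_comm, div_rpow (by positivity) hsα.le,
    ← rpow_mul hs.le, one_div, inv_rpow hs.le, rpow_sub hs]
  field_simp [(Gamma_pos_of_pos hγ).ne']
end

section
/- Let 0 < α < 1, let f_α be the one-sided stable density and f_α(x|t) = t^{-1/α} f_α(x t^{-1/α}) its conditional version at scale t > 0. Let γ > 0, β > αγ, θ > −αγ and λ ≥ 0, and define the mixture M(x) = (1/Γ(γ + θ/α)) ∫_0^∞ (I₊^{β−αγ} f_α(·|t))(x) t^{γ+θ/α−1} e^{−λ t} dt for x ≥ 0. Then for every s > 0, ∫_0^∞ e^{−s x} M(x) dx = s^{αγ−β} / (λ + s^α)^{γ+θ/α}. -/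
/-!
Everything is a computation with Laplace transforms. The scaling `x ↦ x t^{-1/α}` turns
`e^{-s^α}` into `e^{-t s^α}`; by Tonelli, `I₊^ν` is convolution with `x^{ν-1}/Γ(ν)`, whose
transform is `s^{-ν}`; and integrating `e^{-t s^α}` against the gamma weight
`t^{c-1} e^{-λt}/Γ(c)`, `c = γ + θ/α`, gives `(λ + s^α)^{-c}`. The transforms are computed as
`ℝ≥0∞`-valued integrals `∫⁻`, where Tonelli needs no integrability; the Bochner integrals of
the statement are their `toReal`s, because a finite transform forces the inner integrals to be
finite almost everywhere.
-/

open MeasureTheory Real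

open Set Function
open scoped ENNReal
open ENNReal (ofReal ofReal_ne_top ofReal_mul ofReal_toReal toReal_ofReal toReal_mul toReal_nonneg
  mul_ne_top)

noncomputable def laplaceTransform (g : ℝ → ℝ≥0∞) (s : ℝ) : ℝ≥0∞ :=
  ∫⁻ x in Ioi 0, ofReal (exp (-(s * x))) * g x

noncomputable def lintegralRL (ν : ℝ) (g : ℝ → ℝ≥0∞) (x : ℝ) : ℝ≥0∞ :=
  ofReal (1 / Gamma ν) * ∫⁻ u in Ioc 0 x, ofReal ((x - u) ^ (ν - 1)) * g u

section LaplaceTransform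

variable {s : ℝ}

lemma laplaceTransform_congr {g h : ℝ → ℝ≥0∞} (hgh : ∀ x, 0 < x → g x = h x) :
    laplaceTransform g s = laplaceTransform h s :=
  setLIntegral_congr_fun measurableSet_Ioi fun x hx => by rw [hgh x hx]

lemma laplaceTransform_ofReal (h : ℝ → ℝ) :
    laplaceTransform (fun x => ofReal (h x)) s =
      ∫⁻ x in Ioi 0, ofReal (exp (-(s * x)) * h x) := by
  simp only [laplaceTransform, ofReal_mul (exp_nonneg _)]

lemma integral_exp_mul_eq_toReal_laplaceTransform {h : ℝ → ℝ}
    (hh : AEStronglyMeasurable h (volume.restrict (Ioi 0))) (h0 : ∀ x, 0 < x → 0 ≤ h x) :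
    ∫ x in Ioi 0, exp (-(s * x)) * h x =
      (laplaceTransform (fun x => ofReal (h x)) s).toReal := by
  rw [laplaceTransform_ofReal, integral_eq_lintegral_of_nonneg_ae]
  · filter_upwards [self_mem_ae_restrict measurableSet_Ioi] with x hx
    exact mul_nonneg (exp_nonneg _) (h0 x hx)
  · exact (by fun_prop : Measurable fun x : ℝ => exp (-(s * x))).aestronglyMeasurable.mul hh

lemma laplaceTransform_ofReal_toReal {F : ℝ → ℝ≥0∞}
    (hF : AEMeasurable F (volume.restrict (Ioi 0))) (hfin : laplaceTransform F s ≠ ⊤) :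
    laplaceTransform (fun x => ofReal (F x).toReal) s = laplaceTransform F s := by
  refine lintegral_congr_ae ?_
  filter_upwards [ae_lt_top' ((by fun_prop : Measurable fun x : ℝ =>
    ofReal (exp (-(s * x)))).aemeasurable.mul hF) hfin] with x hx
  have hFx : F x ≠ ⊤ := fun h => by simp [h, exp_pos] at hx
  rw [ofReal_toReal hFx]

lemma laplaceTransform_ofReal_rpow {c : ℝ} (hs : 0 < s) (hc : 0 < c) :
    laplaceTransform (fun t => ofReal (t ^ (c - 1))) s = ofReal (s ^ (-c) * Gamma c) := by
  have hint : IntegrableOn (fun t : ℝ => exp (-(s * t)) * t ^ (c - 1)) (Ioi 0) := by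
    refine (integrableOn_rpow_mul_exp_neg_mul_rpow (by linarith : (-1:ℝ) < c - 1) zero_lt_one
      hs).congr_fun (fun t _ => ?_) measurableSet_Ioi
    simp only [rpow_one, neg_mul, mul_comm (exp _)]
  rw [laplaceTransform_ofReal, ← ofReal_integral_eq_lintegral_ofReal hint]
  · simp_rw [mul_comm (exp _)]
    rw [integral_rpow_mul_exp_neg_mul_Ioi hc hs, one_div, inv_rpow hs.le, rpow_neg hs.le]
  · filter_upwards [self_mem_ae_restrict measurableSet_Ioi] with t ht
    exact mul_nonneg (exp_nonneg _) (rpow_nonneg (le_of_lt ht) _)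

lemma setLIntegral_Ioi_exp_mul_comp_sub (u : ℝ) (h : ℝ → ℝ≥0∞) :
    ∫⁻ x in Ioi u, ofReal (exp (-(s * x))) * h (x - u) =
      ofReal (exp (-(s * u))) * laplaceTransform h s := by
  have hshift := (measurePreserving_add_right volume u).setLIntegral_comp_preimage_emb
    (measurableEmbedding_addRight u) (fun x => ofReal (exp (-(s * x))) * h (x - u)) (Ioi u)
  rw [← hshift, preimage_add_const_Ioi, sub_self, laplaceTransform,
    ← lintegral_const_mul' _ _ ofReal_ne_top]
  refine lintegral_congr fun y => ?_
  rw [add_sub_cancel_right, ← mul_assoc, ← ofReal_mul (exp_nonneg _), ← exp_add]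
  ring_nf

end LaplaceTransform

section Measurability

variable {β : Type*} [MeasurableSpace β] {a b : β → ℝ}

lemma measurableSet_snd_mem_Ioc (ha : Measurable a) (hb : Measurable b) :
    MeasurableSet {q : β × ℝ | q.2 ∈ Ioc (a q.1) (b q.1)} :=
  (measurableSet_lt (ha.comp measurable_fst) measurable_snd).inter
    (measurableSet_le measurable_snd (hb.comp measurable_fst))

lemma measurable_setLIntegral_Ioc {F : β → ℝ → ℝ≥0∞} (hF : Measurable (uncurry F))
    (ha : Measurable a) (hb : Measurable b) :
    Measurable fun p => ∫⁻ u in Ioc (a p) (b p), F p u := by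
  simp_rw [← lintegral_indicator measurableSet_Ioc]
  exact (hF.indicator (measurableSet_snd_mem_Ioc ha hb)).lintegral_prod_right'

lemma measurable_setIntegral_Ioc {F : β → ℝ → ℝ} (hF : Measurable (uncurry F))
    (ha : Measurable a) (hb : Measurable b) :
    Measurable fun p => ∫ u in Ioc (a p) (b p), F p u := by
  simp_rw [← integral_indicator measurableSet_Ioc]
  exact (hF.indicator (measurableSet_snd_mem_Ioc ha hb)).stronglyMeasurable
    |>.integral_prod_right' |>.measurable

end Measurability

lemma measurable_RL_uncurry {β : Type*} [MeasurableSpace β] {ν : ℝ} {g : β → ℝ → ℝ}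
    (hg : Measurable (uncurry g)) :
    Measurable (uncurry fun (b : β) (x : ℝ) => RL ν (g b) x) := by
  have hF : Measurable (uncurry fun (p : β × ℝ) (u : ℝ) => (p.2 - u) ^ (ν - 1) * g p.1 u) :=
    by fun_prop
  simp only [uncurry_def, RL, intervalIntegral]
  exact measurable_const.mul ((measurable_setIntegral_Ioc hF measurable_const measurable_snd).sub
    (measurable_setIntegral_Ioc hF measurable_snd measurable_const))

lemma measurable_lintegralRL {ν : ℝ} {g : ℝ → ℝ≥0∞} (hg : Measurable g) :
    Measurable (lintegralRL ν g) :=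
  measurable_const.mul <| measurable_setLIntegral_Ioc
    (F := fun x u => ofReal ((x - u) ^ (ν - 1)) * g u) (by fun_prop) measurable_const
    measurable_id

lemma laplaceTransform_lintegralRL {ν s : ℝ} (hν : 0 < ν) (hs : 0 < s) {g : ℝ → ℝ≥0∞}
    (hg : Measurable g) :
    laplaceTransform (lintegralRL ν g) s = ofReal (s ^ (-ν)) * laplaceTransform g s := by
  set F : ℝ × ℝ → ℝ≥0∞ := {q | q.2 ≤ q.1}.indicator
    fun q => ofReal (exp (-(s * q.1))) * (ofReal ((q.1 - q.2) ^ (ν - 1)) * g q.2)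
  have hF : Measurable F := (by fun_prop : Measurable fun q : ℝ × ℝ =>
    ofReal (exp (-(s * q.1))) * (ofReal ((q.1 - q.2) ^ (ν - 1)) * g q.2)).indicator
      (measurableSet_le measurable_snd measurable_fst)
  have h_inner_u : ∀ x, ofReal (exp (-(s * x))) *
      ∫⁻ u in Ioc 0 x, ofReal ((x - u) ^ (ν - 1)) * g u = ∫⁻ u in Ioi 0, F (x, u) :=
      fun x => by
    change _ = ∫⁻ u in Ioi 0, (Iic x).indicator
      (fun u => ofReal (exp (-(s * x))) * (ofReal ((x - u) ^ (ν - 1)) * g u)) u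
    rw [lintegral_indicator measurableSet_Iic, Measure.restrict_restrict measurableSet_Iic,
      Iic_inter_Ioi, lintegral_const_mul' _ _ ofReal_ne_top]
  have h_inner_x : ∀ u, 0 < u → ∫⁻ x in Ioi 0, F (x, u) =
      ofReal (s ^ (-ν) * Gamma ν) * (ofReal (exp (-(s * u))) * g u) := fun u hu => by
    change ∫⁻ x in Ioi 0, (Ici u).indicator
      (fun x => ofReal (exp (-(s * x))) * (ofReal ((x - u) ^ (ν - 1)) * g u)) x = _
    rw [lintegral_indicator measurableSet_Ici, Measure.restrict_restrict measurableSet_Ici,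
      inter_eq_left.mpr (Ici_subset_Ioi.mpr hu), ← setLIntegral_congr Ioi_ae_eq_Ici]
    simp_rw [← mul_assoc]
    rw [lintegral_mul_const _ (by fun_prop), setLIntegral_Ioi_exp_mul_comp_sub u
      (fun y => ofReal (y ^ (ν - 1))), laplaceTransform_ofReal_rpow hs hν]
    ring
  calc laplaceTransform (lintegralRL ν g) s
      = ofReal (1 / Gamma ν) * ∫⁻ x in Ioi 0, ∫⁻ u in Ioi 0, F (x, u) := by
        simp_rw [laplaceTransform, lintegralRL, mul_left_comm (ofReal (exp _)), h_inner_u]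
        exact lintegral_const_mul' _ _ ofReal_ne_top
    _ = ofReal (1 / Gamma ν) * ∫⁻ u in Ioi 0, ∫⁻ x in Ioi 0, F (x, u) := by
        rw [lintegral_lintegral_swap (f := fun x u => F (x, u)) hF.aemeasurable]
    _ = ofReal (1 / Gamma ν) * ofReal (s ^ (-ν) * Gamma ν) * laplaceTransform g s := by
        rw [setLIntegral_congr_fun measurableSet_Ioi h_inner_x,
          lintegral_const_mul' _ _ ofReal_ne_top, mul_assoc, laplaceTransform]
    _ = ofReal (s ^ (-ν)) * laplaceTransform g s := by
        rw [← ofReal_mul (by positivity), one_div_mul_eq_div,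
          mul_div_cancel_right₀ _ (Gamma_pos_of_pos hν).ne']

lemma RL_eq_toReal_lintegralRL {ν x : ℝ} (hν : 0 < ν) (hx : 0 ≤ x) {g : ℝ → ℝ}
    (hg : Measurable g) (hg0 : ∀ u, 0 < u → 0 ≤ g u) :
    RL ν g x = (lintegralRL ν (fun u => ofReal (g u)) x).toReal := by
  rw [RL, lintegralRL, toReal_mul, toReal_ofReal (by positivity),
    intervalIntegral.integral_of_le hx, integral_eq_lintegral_of_nonneg_ae]
  · congr 2
    refine setLIntegral_congr_fun measurableSet_Ioc fun u hu => ?_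
    exact ofReal_mul (rpow_nonneg (sub_nonneg.mpr hu.2) _)
  · filter_upwards [self_mem_ae_restrict measurableSet_Ioc] with u hu
    exact mul_nonneg (rpow_nonneg (sub_nonneg.mpr hu.2) _) (hg0 u hu.1)
  · exact (by fun_prop : Measurable fun u => (x - u) ^ (ν - 1) * g u).aestronglyMeasurable

lemma laplaceTransform_ofReal_RL {ν s : ℝ} (hν : 0 < ν) (hs : 0 < s) {g : ℝ → ℝ}
    (hg : Measurable g) (hg0 : ∀ u, 0 < u → 0 ≤ g u)
    (hfin : laplaceTransform (fun x => ofReal (g x)) s ≠ ⊤) :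
    laplaceTransform (fun x => ofReal (RL ν g x)) s =
      ofReal (s ^ (-ν)) * laplaceTransform (fun x => ofReal (g x)) s := by
  have hL := laplaceTransform_lintegralRL hν hs hg.ennreal_ofReal
  rw [laplaceTransform_congr fun x hx => by rw [RL_eq_toReal_lintegralRL hν hx.le hg hg0],
    laplaceTransform_ofReal_toReal (measurable_lintegralRL hg.ennreal_ofReal).aemeasurable
      (by rw [hL]; exact mul_ne_top ofReal_ne_top hfin), hL]

section StableDensity

variable {α : ℝ} {f : ℝ → ℝ}

lemma measurable_uncurry_condStable (hf : Measurable f) :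
    Measurable (uncurry (condStable α f)) := by
  unfold condStable
  fun_prop

lemma measurable_condStable (hf : Measurable f) (t : ℝ) : Measurable (condStable α f t) :=
  (measurable_uncurry_condStable hf).comp measurable_prodMk_left

lemma condStable_nonneg (hf0 : ∀ x, 0 ≤ f x) {t : ℝ} (ht : 0 ≤ t) (x : ℝ) :
    0 ≤ condStable α f t x :=
  mul_nonneg (rpow_nonneg ht _) (hf0 _)

lemma integral_exp_mul_condStable (hα : 0 < α)
    (hlap : ∀ s > (0:ℝ), ∫ x in Ioi 0, exp (-(s * x)) * f x = exp (-(s ^ α)))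
    {t s : ℝ} (ht : 0 < t) (hs : 0 < s) :
    ∫ x in Ioi 0, exp (-(s * x)) * condStable α f t x = exp (-(t * s ^ α)) := by
  have hc : 0 < t ^ (-(1 / α)) := rpow_pos_of_pos ht _
  have hscale : (s * (t ^ (-(1 / α)))⁻¹) ^ α = t * s ^ α := by
    rw [← rpow_neg ht.le, neg_neg, mul_rpow hs.le (by positivity), ← rpow_mul ht.le,
      one_div_mul_cancel hα.ne', rpow_one, mul_comm]
  set g : ℝ → ℝ := fun y => exp (-(s * (t ^ (-(1 / α)))⁻¹ * y)) * f y
  calc ∫ x in Ioi 0, exp (-(s * x)) * condStable α f t x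
      = ∫ x in Ioi 0, t ^ (-(1 / α)) * g (x * t ^ (-(1 / α))) := by
        refine setIntegral_congr_fun measurableSet_Ioi fun x _ => ?_
        simp only [condStable, g]
        field_simp
    _ = exp (-(t * s ^ α)) := by
        rw [integral_const_mul, integral_comp_mul_right_Ioi g _ hc, zero_mul, smul_eq_mul,
          hlap _ (by positivity), hscale]
        field_simp

lemma laplaceTransform_ofReal_condStable (hα : 0 < α) (hf0 : ∀ x, 0 ≤ f x)
    (hlap : ∀ s > (0:ℝ), ∫ x in Ioi 0, exp (-(s * x)) * f x = exp (-(s ^ α)))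
    {t s : ℝ} (ht : 0 < t) (hs : 0 < s) :
    laplaceTransform (fun x => ofReal (condStable α f t x)) s = ofReal (exp (-(t * s ^ α))) := by
  have hI := integral_exp_mul_condStable hα hlap ht hs
  rw [laplaceTransform_ofReal, ← hI, ofReal_integral_eq_lintegral_ofReal
    (.of_integral_ne_zero (by rw [hI]; positivity))]
  exact ae_of_all _ fun x => mul_nonneg (exp_nonneg _) (condStable_nonneg hf0 ht.le x)

end StableDensity

section GammaMixture

variable {s K p lam c : ℝ}

lemma laplaceTransform_lintegral_gamma_mixture {R : ℝ → ℝ → ℝ≥0∞}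
    (hR : Measurable (uncurry R)) (hK : 0 ≤ K) (hc : 0 < c) (hp : 0 < lam + p)
    (hRs : ∀ t, 0 < t → laplaceTransform (R t) s = ofReal (K * exp (-(t * p)))) :
    laplaceTransform (fun x => ∫⁻ t in Ioi 0,
        ofReal (t ^ (c - 1) * exp (-(lam * t)) / Gamma c) * R t x) s =
      ofReal (K * (lam + p) ^ (-c)) := by
  have hw : ∀ t, 0 < t → 0 ≤ t ^ (c - 1) * exp (-(lam * t)) / Gamma c := fun t ht => by
    have := rpow_pos_of_pos ht (c - 1)
    positivity
  calc laplaceTransform (fun x => ∫⁻ t in Ioi 0,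
          ofReal (t ^ (c - 1) * exp (-(lam * t)) / Gamma c) * R t x) s
      = ∫⁻ x in Ioi 0, ∫⁻ t in Ioi 0, ofReal (t ^ (c - 1) * exp (-(lam * t)) / Gamma c) *
          (ofReal (exp (-(s * x))) * R t x) := by
        rw [laplaceTransform]
        refine lintegral_congr fun x => ?_
        rw [← lintegral_const_mul' _ _ ofReal_ne_top]
        exact lintegral_congr fun t => mul_left_comm _ _ _
    _ = ∫⁻ t in Ioi 0, ∫⁻ x in Ioi 0, ofReal (t ^ (c - 1) * exp (-(lam * t)) / Gamma c) *
          (ofReal (exp (-(s * x))) * R t x) :=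
        lintegral_lintegral_swap (by fun_prop)
    _ = ∫⁻ t in Ioi 0, ofReal (K / Gamma c) *
          (ofReal (exp (-((lam + p) * t))) * ofReal (t ^ (c - 1))) := by
        refine setLIntegral_congr_fun measurableSet_Ioi fun t ht => ?_
        have hexp : exp (-((lam + p) * t)) = exp (-(lam * t)) * exp (-(t * p)) := by
          rw [← exp_add]; ring_nf
        rw [lintegral_const_mul' _ _ ofReal_ne_top, ← laplaceTransform, hRs t ht,
          ← ofReal_mul (hw t ht), ← ofReal_mul (exp_nonneg _),
          ← ofReal_mul (by have := Gamma_pos_of_pos hc; positivity), hexp]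
        ring_nf
    _ = ofReal (K * (lam + p) ^ (-c)) := by
        rw [lintegral_const_mul' _ _ ofReal_ne_top, ← laplaceTransform,
          laplaceTransform_ofReal_rpow hp hc, ← ofReal_mul
            (by have := Gamma_pos_of_pos hc; positivity)]
        field_simp [(Gamma_pos_of_pos hc).ne']

lemma integral_exp_mul_gamma_mixture {R : ℝ → ℝ → ℝ} (hR : Measurable (uncurry R))
    (hR0 : ∀ t x, 0 < t → 0 < x → 0 ≤ R t x) (hK : 0 ≤ K) (hc : 0 < c) (hp : 0 < lam + p)
    (hRs : ∀ t, 0 < t →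
      laplaceTransform (fun x => ofReal (R t x)) s = ofReal (K * exp (-(t * p)))) :
    ∫ x in Ioi 0, exp (-(s * x)) *
        ((1 / Gamma c) * ∫ t in Ioi 0, R t x * t ^ (c - 1) * exp (-(lam * t))) =
      K * (lam + p) ^ (-c) := by
  set mixture : ℝ → ℝ≥0∞ := fun x => ∫⁻ t in Ioi 0,
    ofReal (t ^ (c - 1) * exp (-(lam * t)) / Gamma c) * ofReal (R t x)
  have hL := laplaceTransform_lintegral_gamma_mixture (R := fun t x => ofReal (R t x))
    hR.ennreal_ofReal hK hc hp hRs
  have hH : Measurable fun q : ℝ × ℝ => R q.1 q.2 * q.1 ^ (c - 1) * exp (-(lam * q.1)) :=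
    (hR.mul (by fun_prop)).mul (by fun_prop)
  have h_mixture : ∀ x, 0 < x →
      (1 / Gamma c) * ∫ t in Ioi 0, R t x * t ^ (c - 1) * exp (-(lam * t)) =
        (mixture x).toReal := fun x hx => by
    rw [← integral_const_mul, integral_eq_lintegral_of_nonneg_ae]
    · congr 1
      refine setLIntegral_congr_fun measurableSet_Ioi fun t ht => ?_
      rw [← ofReal_mul (by have := rpow_pos_of_pos ht (c - 1); positivity)]
      ring_nf
    · filter_upwards [self_mem_ae_restrict measurableSet_Ioi] with t ht
      have := rpow_pos_of_pos ht (c - 1)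
      have := hR0 t x ht hx
      positivity
    · exact (measurable_const.mul (hH.comp measurable_prodMk_right)).aestronglyMeasurable
  have h_meas : Measurable mixture :=
    ((by fun_prop : Measurable fun q : ℝ × ℝ =>
      ofReal (q.1 ^ (c - 1) * exp (-(lam * q.1)) / Gamma c)).mul
        hR.ennreal_ofReal).lintegral_prod_left'
  have h_meas_real : Measurable fun x =>
      (1 / Gamma c) * ∫ t in Ioi 0, R t x * t ^ (c - 1) * exp (-(lam * t)) :=
    measurable_const.mul
      (hH.stronglyMeasurable.integral_prod_left' (μ := volume.restrict _)).measurable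
  rw [integral_exp_mul_eq_toReal_laplaceTransform h_meas_real.aestronglyMeasurable
      fun x hx => by rw [h_mixture x hx]; exact toReal_nonneg,
    laplaceTransform_congr fun x hx => by rw [h_mixture x hx],
    laplaceTransform_ofReal_toReal h_meas.aemeasurable (by rw [hL]; exact ofReal_ne_top),
    hL, toReal_ofReal (by positivity)]

end GammaMixture

theorem stmt_5_general (α : ℝ) (hα0 : 0 < α)
    (f : ℝ → ℝ) (hmeas : Measurable f) (hnn : ∀ x, 0 ≤ f x)
    (hlap : ∀ s > (0:ℝ),
      (∫ x in Set.Ioi (0:ℝ), Real.exp (-(s * x)) * f x) = Real.exp (-(s ^ α)))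
    (γ β θ lam : ℝ) (hβ : α * γ < β) (hθ : -(α * γ) < θ) (hlam : 0 ≤ lam)
    (M : ℝ → ℝ)
    (hM : ∀ x, M x = (1 / Real.Gamma (γ + θ / α)) *
      ∫ t in Set.Ioi (0:ℝ),
        RL (β - α * γ) (condStable α f t) x * t ^ (γ + θ / α - 1) * Real.exp (-(lam * t))) :
    ∀ s > (0:ℝ),
      (∫ x in Set.Ioi (0:ℝ), Real.exp (-(s * x)) * M x)
        = s ^ (α * γ - β) / (lam + s ^ α) ^ (γ + θ / α) := by
  intro s hs
  have hν : 0 < β - α * γ := by linarith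
  have hc : 0 < γ + θ / α := by
    have : -γ < θ / α := by rw [lt_div_iff₀ hα0]; linarith
    linarith
  have hRL0 : ∀ t x, 0 < t → 0 < x → 0 ≤ RL (β - α * γ) (condStable α f t) x :=
      fun t x ht hx => by
    rw [RL_eq_toReal_lintegralRL hν hx.le (measurable_condStable hmeas t)
      fun u _ => condStable_nonneg hnn ht.le u]
    exact toReal_nonneg
  have hRLs : ∀ t, 0 < t → laplaceTransform (fun x => ofReal (RL (β - α * γ)
      (condStable α f t) x)) s = ofReal (s ^ (α * γ - β) * exp (-(t * s ^ α))) := by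
    intro t ht
    have hL := laplaceTransform_ofReal_condStable hα0 hnn hlap ht hs
    rw [laplaceTransform_ofReal_RL hν hs (measurable_condStable hmeas t)
      (fun u _ => condStable_nonneg hnn ht.le u) (by rw [hL]; exact ofReal_ne_top), hL,
      ← ofReal_mul (by positivity), neg_sub]
  simp_rw [hM]
  rw [integral_exp_mul_gamma_mixture (measurable_RL_uncurry (measurable_uncurry_condStable hmeas))
    hRL0 (by positivity) hc (by positivity) hRLs, rpow_neg (by positivity), ← div_eq_mul_inv]

theorem stmt_5 (α : ℝ) (hα0 : 0 < α) (hα1 : α < 1)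
    (f : ℝ → ℝ) (hmeas : Measurable f) (hnn : ∀ x, 0 ≤ f x)
    (hint : Integrable f) (hsupp : ∀ x < (0:ℝ), f x = 0)
    (hlap : ∀ s > (0:ℝ),
      (∫ x in Set.Ioi (0:ℝ), Real.exp (-(s * x)) * f x) = Real.exp (-(s ^ α)))
    (γ β θ lam : ℝ) (hγ : 0 < γ) (hβ : α * γ < β) (hθ : -(α * γ) < θ) (hlam : 0 ≤ lam)
    (M : ℝ → ℝ)
    (hM : ∀ x, M x = (1 / Real.Gamma (γ + θ / α)) *
      ∫ t in Set.Ioi (0:ℝ),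
        RL (β - α * γ) (condStable α f t) x * t ^ (γ + θ / α - 1) * Real.exp (-(lam * t))) :
    ∀ s > (0:ℝ),
      (∫ x in Set.Ioi (0:ℝ), Real.exp (-(s * x)) * M x)
        = s ^ (α * γ - β) / (lam + s ^ α) ^ (γ + θ / α) :=
  stmt_5_general α hα0 f hmeas hnn hlap γ β θ lam hβ hθ hlam M hM
end

section
/- Let 0 < α < 1 and let f_α be the one-sided stable density. Then for every λ ≥ 0 and almost every x > 0, the one-parameter Mittag-Leffler function satisfies E_α(−λ x^α) = (x/α) ∫_0^∞ f_α(x t^{−1/α}) t^{−1/α−1} e^{−λ t} dt. -/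
/-!
Substituting `t = (v / x) ^ (-α)` turns the right-hand side into `∫₀^∞ f(v) e^{z v^{-α}} dv` with
`z = -λ x^α`, so it suffices to show that this integral is `E_α(z)`. Expanding the exponential and
integrating termwise, this reduces to the negative moments `∫₀^∞ v^{-αk} f(v) dv = k! / Γ(αk + 1)`;
the termwise integration is justified because `∑ |z|^k / Γ(αk + 1)` converges, which follows from
the log-convexity bound `Γ(y) / Γ(y + α) ≤ 2 y^{-α}`. For `β > 0` the moment of order `β` is
obtained by writing `v^{-β} = Γ(β)⁻¹ ∫₀^∞ s^{β-1} e^{-sv} ds` and exchanging the integrals, which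
brings in the Laplace transform `e^{-s^α}` and gives `Γ(β/α) / (α Γ(β))`. The moment of order `0`
is the total mass `1`, the limit of the Laplace transform as `s → 0⁺`.
-/

open MeasureTheory Real

open Set Filter Topology
open scoped ENNReal Nat

namespace Real

theorem Gamma_add_one_le_Gamma_add_mul_rpow {α z : ℝ} (hα0 : 0 < α) (hα1 : α < 1) (hz : 0 < z) :
    Gamma (z + 1) ≤ Gamma (z + α) * (z + α) ^ (1 - α) := by
  have hzα : 0 < z + α := by linarith
  have hΓ : 0 < Gamma (z + α) := Gamma_pos_of_pos hzα
  have hconv := Gamma_mul_add_mul_le_rpow_Gamma_mul_rpow_Gamma (s := z + α) (t := z + α + 1)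
    hzα (by linarith) hα0 (by linarith : 0 < 1 - α) (by ring)
  calc Gamma (z + 1) = Gamma (α * (z + α) + (1 - α) * (z + α + 1)) := by ring_nf
    _ ≤ Gamma (z + α) ^ α * Gamma (z + α + 1) ^ (1 - α) := hconv
    _ = Gamma (z + α) ^ α * Gamma (z + α) ^ (1 - α) * (z + α) ^ (1 - α) := by
        rw [Gamma_add_one hzα.ne', mul_rpow hzα.le hΓ.le]; ring
    _ = Gamma (z + α) * (z + α) ^ (1 - α) := by
        rw [← rpow_add hΓ, add_sub_cancel, rpow_one]

theorem Gamma_div_Gamma_add_le {α z : ℝ} (hα0 : 0 < α) (hα1 : α < 1) (hz : 1 ≤ z) :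
    Gamma z / Gamma (z + α) ≤ 2 * z ^ (-α) := by
  have hz0 : 0 < z := by linarith
  have hΓ : 0 < Gamma (z + α) := Gamma_pos_of_pos (by linarith)
  have htwo : (2 : ℝ) ^ (1 - α) ≤ 2 := by
    simpa using rpow_le_rpow_of_exponent_le (by norm_num : (1 : ℝ) ≤ 2) (by linarith : 1 - α ≤ 1)
  have hpow : (z + α) ^ (1 - α) ≤ z * (2 * z ^ (-α)) := calc
    (z + α) ^ (1 - α) ≤ (2 * z) ^ (1 - α) := rpow_le_rpow (by linarith) (by linarith) (by linarith)
    _ = 2 ^ (1 - α) * (z * z ^ (-α)) := by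
        rw [mul_rpow zero_le_two hz0.le, sub_eq_add_neg, rpow_add hz0, rpow_one]
    _ ≤ 2 * (z * z ^ (-α)) := by gcongr
    _ = z * (2 * z ^ (-α)) := by ring
  rw [div_le_iff₀ hΓ, ← mul_le_mul_iff_of_pos_left hz0, ← Gamma_add_one hz0.ne']
  calc Gamma (z + 1) ≤ Gamma (z + α) * (z + α) ^ (1 - α) :=
        Gamma_add_one_le_Gamma_add_mul_rpow hα0 hα1 hz0
    _ ≤ Gamma (z + α) * (z * (2 * z ^ (-α))) := by gcongr
    _ = z * (2 * z ^ (-α) * Gamma (z + α)) := by ring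

theorem lintegral_rpow_mul_exp_neg_mul_Ioi {a r : ℝ} (ha : 0 < a) (hr : 0 < r) :
    ∫⁻ t in Ioi 0, ENNReal.ofReal (t ^ (a - 1) * exp (-(r * t)))
      = ENNReal.ofReal (Gamma a * r ^ (-a)) := by
  have hval : ∫ t in Ioi 0, t ^ (a - 1) * exp (-(r * t)) = Gamma a * r ^ (-a) := by
    rw [integral_rpow_mul_exp_neg_mul_Ioi ha hr, one_div, inv_rpow hr.le, ← rpow_neg hr.le,
      mul_comm]
  have hpos : 0 < Gamma a * r ^ (-a) := mul_pos (Gamma_pos_of_pos ha) (rpow_pos_of_pos hr _)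
  rw [← hval, ofReal_integral_eq_lintegral_ofReal
    (Integrable.of_integral_ne_zero (hval ▸ hpos.ne'))]
  exact (ae_restrict_iff' measurableSet_Ioi).2 <| .of_forall fun t (ht : 0 < t) => by positivity

end Real

theorem summable_pow_div_Gamma_mul_add_one {α : ℝ} (hα0 : 0 < α) (hα1 : α < 1) (z : ℝ) :
    Summable (fun k : ℕ => z ^ k / Gamma (α * k + 1)) := by
  refine summable_of_ratio_norm_eventually_le (r := 1 / 2) (by norm_num) ?_
  have hratio : Tendsto (fun k : ℕ => |z| * (2 * (α * k + 1) ^ (-α))) atTop (𝓝 0) := by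
    have harg : Tendsto (fun k : ℕ => α * k + 1) atTop atTop :=
      tendsto_atTop_add_const_right _ _ (tendsto_natCast_atTop_atTop.const_mul_atTop hα0)
    simpa using (((tendsto_rpow_neg_atTop hα0).comp harg).const_mul 2).const_mul |z|
  filter_upwards [hratio.eventually (ge_mem_nhds (by norm_num : (0 : ℝ) < 1 / 2))] with k hk
  have hz1 : 1 ≤ α * k + 1 := le_add_of_nonneg_left (by positivity)
  have hΓ : 0 < Gamma (α * k + 1) := Gamma_pos_of_pos (by linarith)
  have hΓ' : 0 < Gamma (α * k + 1 + α) := Gamma_pos_of_pos (by linarith)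
  have hsucc : α * ((k + 1 : ℕ) : ℝ) + 1 = α * k + 1 + α := by push_cast; ring
  rw [hsucc, norm_div, norm_div, norm_pow, norm_pow, pow_succ, norm_of_nonneg hΓ.le,
    norm_of_nonneg hΓ'.le, norm_eq_abs]
  calc |z| ^ k * |z| / Gamma (α * k + 1 + α)
      = |z| * (Gamma (α * k + 1) / Gamma (α * k + 1 + α)) * (|z| ^ k / Gamma (α * k + 1)) := by
        field_simp
    _ ≤ |z| * (2 * (α * k + 1) ^ (-α)) * (|z| ^ k / Gamma (α * k + 1)) := by
        gcongr; exact Gamma_div_Gamma_add_le hα0 hα1 hz1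
    _ ≤ 1 / 2 * (|z| ^ k / Gamma (α * k + 1)) := by gcongr

theorem integral_Ioi_comp_mul_rpow_neg_inv {α x : ℝ} (hα : 0 < α) (hx : 0 < x) (g w : ℝ → ℝ) :
    ∫ t in Ioi 0, g (x * t ^ (-(1 / α))) * t ^ (-(1 / α) - 1) * w t
      = α / x * ∫ v in Ioi 0, g v * w (x ^ α * v ^ (-α)) := by
  have hscale := integral_comp_mul_left_Ioi (fun v => g v * w (x ^ α * v ^ (-α))) 0 hx
  rw [mul_zero, smul_eq_mul] at hscale
  rw [div_eq_mul_inv α, mul_assoc, ← hscale, ← integral_const_mul,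
    ← integral_comp_rpow_Ioi _ (neg_ne_zero.2 hα.ne')]
  refine setIntegral_congr_fun measurableSet_Ioi fun u (hu : 0 < u) => ?_
  have hinv : (u ^ (-α)) ^ (-(1 / α)) = u := by
    rw [← rpow_mul hu.le, neg_mul_neg, mul_one_div_cancel hα.ne', rpow_one]
  have hjac : u ^ (-α - 1) * (u ^ (-α)) ^ (-(1 / α) - 1) = 1 := by
    rw [← rpow_mul hu.le, ← rpow_add hu]
    field_simp
    simp
  have hscaled : x ^ α * (x * u) ^ (-α) = u ^ (-α) := by
    rw [mul_rpow hx.le hu.le, ← mul_assoc, ← rpow_add hx, add_neg_cancel, rpow_zero, one_mul]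
  simp only [smul_eq_mul, abs_neg, abs_of_pos hα, hinv, hscaled]
  linear_combination (α * g (x * u) * w (u ^ (-α))) * hjac

structure IsOneSidedStableDensity (α : ℝ) (f : ℝ → ℝ) : Prop where
  measurable : Measurable f
  nonneg : ∀ x, 0 ≤ f x
  integrable : Integrable f
  laplace : ∀ s > (0 : ℝ), ∫ x in Ioi (0 : ℝ), exp (-(s * x)) * f x = exp (-(s ^ α))

namespace IsOneSidedStableDensity

variable {α : ℝ} {f : ℝ → ℝ}

theorem norm_exp_neg_mul_mul_le (hf : IsOneSidedStableDensity α f) {s u : ℝ} (hs : 0 ≤ s)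
    (hu : 0 ≤ u) : ‖exp (-(s * u)) * f u‖ ≤ f u := by
  rw [norm_mul, norm_of_nonneg (exp_pos _).le, norm_of_nonneg (hf.nonneg u)]
  exact mul_le_of_le_one_left (hf.nonneg u) (exp_le_one_iff.2 (by nlinarith))

theorem integrableOn_exp_neg_mul_mul (hf : IsOneSidedStableDensity α f) {s : ℝ} (hs : 0 ≤ s) :
    IntegrableOn (fun u => exp (-(s * u)) * f u) (Ioi 0) :=
  hf.integrable.integrableOn.mono' (by have := hf.measurable; fun_prop)
    ((ae_restrict_iff' measurableSet_Ioi).2 <| .of_forall fun _ hu =>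
      hf.norm_exp_neg_mul_mul_le hs (le_of_lt hu))

theorem setIntegral_eq_one (hf : IsOneSidedStableDensity α f) (hα : 0 < α) :
    ∫ u in Ioi 0, f u = 1 := by
  have hlaplace : Tendsto (fun s => ∫ u in Ioi 0, exp (-(s * u)) * f u) (𝓝[>] 0)
      (𝓝 (∫ u in Ioi 0, f u)) := by
    refine tendsto_integral_filter_of_dominated_convergence f
      (.of_forall fun s => (by have := hf.measurable; fun_prop))
      ?_ hf.integrable.integrableOn
      (.of_forall fun u => ?_)
    · filter_upwards [self_mem_nhdsWithin] with s hs
      exact (ae_restrict_iff' measurableSet_Ioi).2 <| .of_forall fun _ hu =>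
        hf.norm_exp_neg_mul_mul_le (le_of_lt hs) (le_of_lt hu)
    · have : Continuous fun s => exp (-(s * u)) * f u := by fun_prop
      simpa using (this.tendsto 0).mono_left nhdsWithin_le_nhds
  have hstable : Tendsto (fun s : ℝ => exp (-(s ^ α))) (𝓝[>] 0) (𝓝 1) := by
    have : ContinuousAt (fun s : ℝ => exp (-(s ^ α))) 0 :=
      (continuousAt_rpow_const 0 α (Or.inr hα.le)).neg.rexp
    simpa [zero_rpow hα.ne'] using this.tendsto.mono_left nhdsWithin_le_nhds
  refine tendsto_nhds_unique (hlaplace.congr' ?_) hstable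
  filter_upwards [self_mem_nhdsWithin] with s hs using hf.laplace s hs

theorem lintegral_rpow_neg_mul (hf : IsOneSidedStableDensity α f) (hα : 0 < α) {β : ℝ}
    (hβ : 0 < β) :
    ∫⁻ u in Ioi 0, ENNReal.ofReal (u ^ (-β) * f u)
      = ENNReal.ofReal (Gamma (β / α) / (α * Gamma β)) := by
  have hΓ : 0 < Gamma β := Gamma_pos_of_pos hβ
  set K : ℝ → ℝ → ℝ≥0∞ := fun u s =>
    ENNReal.ofReal (s ^ (β - 1) * exp (-(u * s))) * ENNReal.ofReal (f u)
  have hs_first : ∀ u ∈ Ioi (0 : ℝ),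
      ∫⁻ s in Ioi 0, K u s = ENNReal.ofReal (Gamma β) * ENNReal.ofReal (u ^ (-β) * f u) := by
    intro u (hu : 0 < u)
    rw [lintegral_mul_const' _ _ ENNReal.ofReal_ne_top, lintegral_rpow_mul_exp_neg_mul_Ioi hβ hu,
      ← ENNReal.ofReal_mul (by positivity), ← ENNReal.ofReal_mul hΓ.le, mul_assoc]
  have hu_first : ∀ s ∈ Ioi (0 : ℝ),
      ∫⁻ u in Ioi 0, K u s = ENNReal.ofReal (s ^ (β - 1) * exp (-(s ^ α))) := by
    intro s (hs : 0 < s)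
    calc ∫⁻ u in Ioi 0, K u s
        = ∫⁻ u in Ioi 0, ENNReal.ofReal (s ^ (β - 1)) * ENNReal.ofReal (exp (-(s * u)) * f u) := by
          refine lintegral_congr fun u => ?_
          have := hf.nonneg u
          simp only [K]
          rw [← ENNReal.ofReal_mul (by positivity), ← ENNReal.ofReal_mul (by positivity),
            mul_comm u s, mul_assoc]
      _ = ENNReal.ofReal (s ^ (β - 1)) * ENNReal.ofReal (∫ u in Ioi 0, exp (-(s * u)) * f u) := by
          rw [lintegral_const_mul' _ _ ENNReal.ofReal_ne_top, ofReal_integral_eq_lintegral_ofReal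
            (hf.integrableOn_exp_neg_mul_mul hs.le)
            (.of_forall fun u => mul_nonneg (exp_pos _).le (hf.nonneg u))]
      _ = ENNReal.ofReal (s ^ (β - 1) * exp (-(s ^ α))) := by
          rw [hf.laplace s hs, ← ENNReal.ofReal_mul (by positivity)]
  have hswap : ∫⁻ u in Ioi 0, ∫⁻ s in Ioi 0, K u s = ∫⁻ s in Ioi 0, ∫⁻ u in Ioi 0, K u s :=
    lintegral_lintegral_swap (by have := hf.measurable; fun_prop)
  rw [setLIntegral_congr_fun measurableSet_Ioi hs_first,
    setLIntegral_congr_fun measurableSet_Ioi hu_first, lintegral_const_mul' _ _ ENNReal.ofReal_ne_top,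
    ← ofReal_integral_eq_lintegral_ofReal (integrableOn_rpow_mul_exp_neg_rpow (by linarith) hα)
      ((ae_restrict_iff' measurableSet_Ioi).2 <| .of_forall fun s (hs : 0 < s) => by positivity),
    integral_rpow_mul_exp_neg_rpow hα (by linarith), sub_add_cancel] at hswap
  rw [← ENNReal.mul_right_inj (ENNReal.ofReal_pos.2 hΓ).ne' ENNReal.ofReal_ne_top, hswap,
    ← ENNReal.ofReal_mul hΓ.le]
  congr 1
  field_simp

theorem lintegral_rpow_neg_natCast_mul (hf : IsOneSidedStableDensity α f) (hα : 0 < α) (k : ℕ) :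
    ∫⁻ u in Ioi 0, ENNReal.ofReal (u ^ (-(α * k)) * f u)
      = ENNReal.ofReal (k ! / Gamma (α * k + 1)) := by
  rcases k.eq_zero_or_pos with rfl | hk
  · simp only [CharP.cast_eq_zero, mul_zero, neg_zero, rpow_zero, one_mul, Nat.factorial_zero,
      Nat.cast_one, zero_add, Gamma_one, div_one]
    rw [← ofReal_integral_eq_lintegral_ofReal hf.integrable.integrableOn (.of_forall hf.nonneg),
      hf.setIntegral_eq_one hα]
  · have hαk : 0 < α * k := by positivity
    rw [hf.lintegral_rpow_neg_mul hα hαk, mul_div_cancel_left₀ _ hα.ne', Gamma_add_one hαk.ne']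
    obtain ⟨m, rfl⟩ := Nat.exists_eq_add_of_lt hk
    rw [zero_add, Nat.cast_succ, Gamma_nat_eq_factorial, Nat.factorial_succ]
    congr 1
    push_cast
    field_simp

theorem integral_rpow_neg_natCast_mul (hf : IsOneSidedStableDensity α f) (hα : 0 < α) (k : ℕ) :
    ∫ u in Ioi 0, u ^ (-(α * k)) * f u = k ! / Gamma (α * k + 1) := by
  have hmeas := hf.measurable
  rw [integral_eq_lintegral_of_nonneg_ae _ (by fun_prop), hf.lintegral_rpow_neg_natCast_mul hα k,
    ENNReal.toReal_ofReal (div_nonneg (by positivity) (Gamma_pos_of_pos (by positivity)).le)]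
  exact (ae_restrict_iff' measurableSet_Ioi).2 <| .of_forall fun u (hu : 0 < u) =>
    mul_nonneg (rpow_nonneg hu.le _) (hf.nonneg u)

theorem setIntegral_mul_exp_mul_rpow_neg (hf : IsOneSidedStableDensity α f) (hα0 : 0 < α)
    (hα1 : α < 1) (z : ℝ) :
    ∫ u in Ioi 0, f u * exp (z * u ^ (-α)) = mittagLeffler α z := by
  set F : ℕ → ℝ → ℝ := fun k u => z ^ k / k ! * (u ^ (-(α * k)) * f u)
  have hF_meas : ∀ k, AEStronglyMeasurable (F k) (volume.restrict (Ioi 0)) := fun k => by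
    have := hf.measurable
    fun_prop
  have hF_lintegral : ∀ k, ∫⁻ u in Ioi 0, ‖F k u‖ₑ
      = ENNReal.ofReal (|z| ^ k / Gamma (α * k + 1)) := by
    intro k
    calc ∫⁻ u in Ioi 0, ‖F k u‖ₑ
        = ∫⁻ u in Ioi 0, ENNReal.ofReal (|z| ^ k / k !)
            * ENNReal.ofReal (u ^ (-(α * k)) * f u) := by
          refine setLIntegral_congr_fun measurableSet_Ioi fun u (hu : 0 < u) => ?_
          have := hf.nonneg u
          rw [← ENNReal.ofReal_mul (by positivity), ← ofReal_norm]
          simp only [F, norm_mul, norm_div, norm_pow, norm_eq_abs, Nat.abs_cast,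
            abs_of_nonneg (rpow_nonneg hu.le _), abs_of_nonneg this]
      _ = ENNReal.ofReal (|z| ^ k / Gamma (α * k + 1)) := by
          rw [lintegral_const_mul' _ _ ENNReal.ofReal_ne_top,
            hf.lintegral_rpow_neg_natCast_mul hα0 k, ← ENNReal.ofReal_mul (by positivity)]
          congr 1
          field_simp
  have hF_summable : ∑' k, ∫⁻ u in Ioi 0, ‖F k u‖ₑ ≠ ∞ := by
    rw [tsum_congr hF_lintegral, ← ENNReal.ofReal_tsum_of_nonneg
      (fun k => div_nonneg (by positivity) (Gamma_pos_of_pos (by positivity)).le)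
      (summable_pow_div_Gamma_mul_add_one hα0 hα1 |z|)]
    exact ENNReal.ofReal_ne_top
  have hF_sum : ∀ u ∈ Ioi (0 : ℝ), ∑' k, F k u = f u * exp (z * u ^ (-α)) := by
    intro u (hu : 0 < u)
    have hterm : ∀ k : ℕ, F k u = (z * u ^ (-α)) ^ k / k ! * f u := fun k => by
      rw [mul_pow, ← rpow_natCast (u ^ (-α)), ← rpow_mul hu.le, neg_mul]
      ring
    rw [tsum_congr hterm, tsum_mul_right, exp_eq_exp_ℝ, NormedSpace.exp_eq_tsum_div, mul_comm]
  calc ∫ u in Ioi 0, f u * exp (z * u ^ (-α))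
      = ∫ u in Ioi 0, ∑' k, F k u := (setIntegral_congr_fun measurableSet_Ioi hF_sum).symm
    _ = ∑' k, ∫ u in Ioi 0, F k u := integral_tsum hF_meas hF_summable
    _ = mittagLeffler α z := by
        refine tsum_congr fun k => ?_
        rw [integral_const_mul, hf.integral_rpow_neg_natCast_mul hα0 k]
        field_simp

end IsOneSidedStableDensity

theorem stmt_7_general (α : ℝ) (hα0 : 0 < α) (hα1 : α < 1)
    (f : ℝ → ℝ) (hmeas : Measurable f) (hnn : ∀ x, 0 ≤ f x)
    (hint : Integrable f)
    (hlap : ∀ s > (0:ℝ),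
      (∫ x in Set.Ioi (0:ℝ), Real.exp (-(s * x)) * f x) = Real.exp (-(s ^ α)))
    (lam : ℝ) :
    ∀ᵐ x ∂(volume.restrict (Set.Ioi (0:ℝ))),
      mittagLeffler α (-(lam * x ^ α))
        = (x / α) *
            ∫ t in Set.Ioi (0:ℝ),
              f (x * t ^ (-(1/α))) * t ^ (-(1/α) - 1) * Real.exp (-(lam * t)) := by
  have hf : IsOneSidedStableDensity α f := ⟨hmeas, hnn, hint, hlap⟩
  filter_upwards [ae_restrict_mem measurableSet_Ioi] with x (hx : 0 < x)
  rw [integral_Ioi_comp_mul_rpow_neg_inv hα0 hx, ← hf.setIntegral_mul_exp_mul_rpow_neg hα0 hα1]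
  simp only [neg_mul, mul_assoc]
  field_simp

theorem stmt_7 (α : ℝ) (hα0 : 0 < α) (hα1 : α < 1)
    (f : ℝ → ℝ) (hmeas : Measurable f) (hnn : ∀ x, 0 ≤ f x)
    (hint : Integrable f) (hsupp : ∀ x < (0:ℝ), f x = 0)
    (hlap : ∀ s > (0:ℝ),
      (∫ x in Set.Ioi (0:ℝ), Real.exp (-(s * x)) * f x) = Real.exp (-(s ^ α)))
    (lam : ℝ) (hlam : 0 ≤ lam) :
    ∀ᵐ x ∂(volume.restrict (Set.Ioi (0:ℝ))),
      mittagLeffler α (-(lam * x ^ α))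
        = (x / α) *
            ∫ t in Set.Ioi (0:ℝ),
              f (x * t ^ (-(1/α))) * t ^ (-(1/α) - 1) * Real.exp (-(lam * t)) :=
  stmt_7_general α hα0 hα1 f hmeas hnn hint hlap lam
end

section
/- Let 0 < α < 1, let f_α be the one-sided stable density and f_α(x|t) = t^{-1/α} f_α(x t^{-1/α}) its conditional version at scale t > 0. Let γ > 0, β > αγ, θ > −αγ, and let P^γ_{α,β,θ} be the probability measure with density (Γ(β + θ)/Γ(γ + θ/α)) (I₊^{β−αγ} f_α(·|t))(1) t^{γ+θ/α−1} on (0, ∞). Then for every natural number n, its n-th moment is ∫_0^∞ t^n dP^γ_{α,β,θ}(t) = Γ(β + θ) Γ(γ + n + θ/α) / (Γ(γ + θ/α) Γ(β + α n + θ)). -/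
open MeasureTheory Real

/-!
With `q = γ + n + θ / α` and `ν = β - α γ`, the `n`-th moment is the normalising constant times the
Mellin transform `∫₀^∞ t^(q-1) (I₊^ν f_α(·|t))(1) dt`. Everything is nonnegative, so after expanding
the fractional integral the order of integration may be exchanged. For fixed `u ∈ (0, 1]` the
substitution `t = (u / x)^α` turns the inner integral into `α u^(αq-1) ∫₀^∞ x^(-αq) f_α(x) dx`, and
the negative moments of `f_α` follow from its Laplace transform through
`Γ(s) x^(-s) = ∫₀^∞ r^(s-1) e^(-rx) dr`: `∫₀^∞ x^(-s) f_α(x) dx = Γ(s/α) / (α Γ(s))`.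
What is left is the Beta integral `∫₀^1 u^(αq-1) (1-u)^(ν-1) du`, and the Mellin transform equals
`Γ(q) / Γ(ν + α q)`.
-/

open Set
open scoped ENNReal

theorem lintegral_comp_mul_rpow_Ioi (g : ℝ → ℝ≥0∞) {c p : ℝ} (hc : 0 < c) (hp : p ≠ 0) :
    ∫⁻ x in Ioi 0, ENNReal.ofReal (c * |p| * x ^ (p - 1)) * g (c * x ^ p) =
      ∫⁻ y in Ioi 0, g y := by
  have himage : (fun x : ℝ => c * x ^ p) '' Ioi 0 = Ioi 0 := by
    ext y
    refine ⟨?_, fun hy => ⟨(y / c) ^ p⁻¹, rpow_pos_of_pos (div_pos hy hc) _, ?_⟩⟩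
    · rintro ⟨x, hx, rfl⟩
      exact mul_pos hc (rpow_pos_of_pos hx p)
    · show c * ((y / c) ^ p⁻¹) ^ p = y
      rw [← rpow_mul (div_pos hy hc).le, inv_mul_cancel₀ hp, rpow_one, mul_div_cancel₀ _ hc.ne']
  have hderiv : ∀ x ∈ Ioi (0:ℝ),
      HasDerivWithinAt (fun x : ℝ => c * x ^ p) (c * (p * x ^ (p - 1))) (Ioi 0) x :=
    fun x hx => ((hasDerivAt_rpow_const (Or.inl (ne_of_gt hx))).const_mul c).hasDerivWithinAt
  have hinj : InjOn (fun x : ℝ => c * x ^ p) (Ioi 0) := fun x hx y hy hxy =>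
    rpow_left_injOn hp (mem_Ioi.1 hx).le (mem_Ioi.1 hy).le (mul_left_cancel₀ hc.ne' hxy)
  conv_rhs =>
    rw [← himage, lintegral_image_eq_lintegral_abs_deriv_mul measurableSet_Ioi hderiv hinj]
  refine setLIntegral_congr_fun measurableSet_Ioi fun x (hx : 0 < x) => ?_
  rw [abs_mul, abs_mul, abs_of_pos hc, abs_of_pos (rpow_pos_of_pos hx _), mul_assoc]

theorem lintegral_ofReal_eq_of_integral_eq {X : Type*} [MeasurableSpace X] {μ : Measure X}
    {g : X → ℝ} {c : ℝ} (hg : 0 ≤ᵐ[μ] g) (hc : 0 < c) (h : ∫ x, g x ∂μ = c) :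
    ∫⁻ x, ENNReal.ofReal (g x) ∂μ = ENNReal.ofReal c := by
  rw [← ofReal_integral_eq_lintegral_ofReal (Integrable.of_integral_ne_zero (h ▸ hc.ne')) hg, h]

theorem integral_integral_eq_of_lintegral_lintegral_eq {X Y : Type*} [MeasurableSpace X]
    [MeasurableSpace Y] {μ : Measure X} {ν : Measure Y} [SFinite μ] [SFinite ν]
    {F : X → Y → ℝ} (hF : Measurable (Function.uncurry F))
    (hF0 : 0 ≤ᵐ[μ.prod ν] Function.uncurry F) {c : ℝ} (hc : 0 ≤ c)
    (h : ∫⁻ x, ∫⁻ y, ENNReal.ofReal (F x y) ∂ν ∂μ = ENNReal.ofReal c) :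
    ∫ x, ∫ y, F x y ∂ν ∂μ = c := by
  have hlint : ∫⁻ z, ENNReal.ofReal (Function.uncurry F z) ∂μ.prod ν = ENNReal.ofReal c := by
    rw [lintegral_prod _ hF.ennreal_ofReal.aemeasurable, ← h]
    rfl
  have hint : Integrable (Function.uncurry F) (μ.prod ν) :=
    ⟨hF.aestronglyMeasurable, (hasFiniteIntegral_iff_ofReal hF0).2 (hlint ▸ ENNReal.ofReal_lt_top)⟩
  have hprod := integral_prod _ hint
  simp only [Function.uncurry_apply_pair] at hprod
  rw [← hprod, integral_eq_lintegral_of_nonneg_ae hF0 hF.aestronglyMeasurable,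
    hlint, ENNReal.toReal_ofReal hc]

theorem integral_rpow_mul_one_sub_rpow {a b : ℝ} (ha : 0 < a) (hb : 0 < b) :
    ∫ u in (0:ℝ)..1, u ^ (a - 1) * (1 - u) ^ (b - 1) = Gamma a * Gamma b / Gamma (a + b) := by
  have hbeta : Complex.betaIntegral a b =
      ((∫ u in (0:ℝ)..1, u ^ (a - 1) * (1 - u) ^ (b - 1) : ℝ) : ℂ) := by
    rw [Complex.betaIntegral, ← intervalIntegral.integral_ofReal]
    refine intervalIntegral.integral_congr fun u hu => ?_
    rw [uIcc_of_le zero_le_one] at hu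
    rw [Complex.ofReal_mul, Complex.ofReal_cpow hu.1, Complex.ofReal_cpow (sub_nonneg.2 hu.2)]
    push_cast
    rfl
  have key := Complex.Gamma_mul_Gamma_eq_betaIntegral (s := a) (t := b)
    (by simpa using ha) (by simpa using hb)
  rw [hbeta, Complex.Gamma_ofReal, Complex.Gamma_ofReal, ← Complex.ofReal_add,
    Complex.Gamma_ofReal, ← Complex.ofReal_mul, ← Complex.ofReal_mul, Complex.ofReal_inj] at key
  rw [key, mul_div_cancel_left₀ _ (Gamma_pos_of_pos (add_pos ha hb)).ne']

def HasStableLaplaceTransform (α : ℝ) (f : ℝ → ℝ) : Prop :=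
  ∀ s > (0:ℝ), (∫ x in Ioi (0:ℝ), exp (-(s * x)) * f x) = exp (-(s ^ α))

namespace HasStableLaplaceTransform

variable {α : ℝ} {f : ℝ → ℝ}

theorem lintegral_exp_neg_mul (hlap : HasStableLaplaceTransform α f) (hnn : ∀ x, 0 ≤ f x)
    {r : ℝ} (hr : 0 < r) :
    ∫⁻ y in Ioi 0, ENNReal.ofReal (exp (-(r * y)) * f y) = ENNReal.ofReal (exp (-(r ^ α))) :=
  lintegral_ofReal_eq_of_integral_eq (ae_of_all _ fun y => mul_nonneg (exp_pos _).le (hnn y))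
    (exp_pos _) (hlap r hr)

theorem lintegral_rpow_neg_mul (hlap : HasStableLaplaceTransform α f) (hα : 0 < α)
    (hf : Measurable f) (hnn : ∀ x, 0 ≤ f x) {s : ℝ} (hs : 0 < s) :
    ∫⁻ y in Ioi 0, ENNReal.ofReal (y ^ (-s) * f y) =
      ENNReal.ofReal (Gamma (s / α) / (α * Gamma s)) := by
  have hΓ := Gamma_pos_of_pos hs
  have hmellin : ∀ y ∈ Ioi (0:ℝ), ENNReal.ofReal (y ^ (-s) * f y) =
      ∫⁻ r in Ioi 0, ENNReal.ofReal ((Gamma s)⁻¹ * r ^ (s - 1)) *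
        ENNReal.ofReal (exp (-(r * y)) * f y) := by
    intro y (hy : 0 < y)
    have hgamma : ∫⁻ r in Ioi 0, ENNReal.ofReal ((Gamma s)⁻¹ * (r ^ (s - 1) * exp (-(y * r)))) =
        ENNReal.ofReal (y ^ (-s)) := by
      refine lintegral_ofReal_eq_of_integral_eq
        (ae_restrict_of_forall_mem measurableSet_Ioi fun r (hr : 0 < r) => by positivity)
        (rpow_pos_of_pos hy _) ?_
      rw [integral_const_mul, integral_rpow_mul_exp_neg_mul_Ioi hs hy, one_div, inv_rpow hy.le,
        rpow_neg hy.le]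
      field_simp
    rw [ENNReal.ofReal_mul (rpow_nonneg hy.le _), ← hgamma,
      ← lintegral_mul_const' _ _ ENNReal.ofReal_ne_top]
    refine setLIntegral_congr_fun measurableSet_Ioi fun r (hr : 0 < r) => ?_
    rw [← ENNReal.ofReal_mul (by positivity), ← ENNReal.ofReal_mul (by positivity), mul_comm y r]
    ring_nf
  have hlaplace : ∀ r ∈ Ioi (0:ℝ), ∫⁻ y in Ioi 0, ENNReal.ofReal ((Gamma s)⁻¹ * r ^ (s - 1)) *
      ENNReal.ofReal (exp (-(r * y)) * f y) =
        ENNReal.ofReal ((Gamma s)⁻¹ * (r ^ (s - 1) * exp (-r ^ α))) := by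
    intro r (hr : 0 < r)
    rw [lintegral_const_mul' _ _ ENNReal.ofReal_ne_top, hlap.lintegral_exp_neg_mul hnn hr,
      ← ENNReal.ofReal_mul (by positivity), mul_assoc]
  rw [setLIntegral_congr_fun measurableSet_Ioi hmellin,
    lintegral_lintegral_swap (by fun_prop), setLIntegral_congr_fun measurableSet_Ioi hlaplace]
  refine lintegral_ofReal_eq_of_integral_eq
    (ae_restrict_of_forall_mem measurableSet_Ioi fun r (hr : 0 < r) => by positivity)
    (by have := Gamma_pos_of_pos (div_pos hs hα); positivity) ?_
  rw [integral_const_mul, integral_rpow_mul_exp_neg_rpow hα (by linarith), sub_add_cancel]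
  field_simp

theorem lintegral_rpow_mul_condStable (hlap : HasStableLaplaceTransform α f) (hα : 0 < α)
    (hf : Measurable f) (hnn : ∀ x, 0 ≤ f x) {q u : ℝ} (hq : 0 < q) (hu : 0 < u) :
    ∫⁻ t in Ioi 0, ENNReal.ofReal (t ^ (q - 1) * condStable α f t u) =
      ENNReal.ofReal (u ^ (α * q - 1) * (Gamma q / Gamma (α * q))) := by
  have huα : 0 < u ^ α := rpow_pos_of_pos hu α
  -- the substitution `t = (u / x) ^ α` makes the argument of `f` equal to `x`
  rw [← lintegral_comp_mul_rpow_Ioi _ huα (neg_ne_zero.2 hα.ne')]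
  have hsubst : ∀ x ∈ Ioi (0:ℝ), ENNReal.ofReal (u ^ α * |-α| * x ^ (-α - 1)) *
      ENNReal.ofReal ((u ^ α * x ^ (-α)) ^ (q - 1) * condStable α f (u ^ α * x ^ (-α)) u) =
        ENNReal.ofReal (α * u ^ (α * q - 1)) * ENNReal.ofReal (x ^ (-(α * q)) * f x) := by
    intro x (hx : 0 < x)
    have hxα : 0 < x ^ α := rpow_pos_of_pos hx α
    have hinv : (u ^ α * x ^ (-α)) ^ (-(1 / α)) = x / u := by
      rw [mul_rpow huα.le (rpow_nonneg hx.le _), ← rpow_mul hu.le, ← rpow_mul hx.le]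
      rw [show α * -(1 / α) = -1 by field_simp, show -α * -(1 / α) = 1 by field_simp,
        rpow_neg_one, rpow_one, div_eq_inv_mul]
    have hpow : (u ^ α * x ^ (-α)) ^ (q - 1) = u ^ (α * q) * x ^ (-(α * q)) * (x ^ α / u ^ α) := by
      rw [rpow_sub_one (by positivity), mul_rpow huα.le (rpow_nonneg hx.le _), ← rpow_mul hu.le,
        ← rpow_mul hx.le, rpow_neg hx.le, neg_mul, rpow_neg hx.le]
      field_simp
    rw [condStable, hinv, hpow, mul_div_cancel₀ _ hu.ne', abs_neg, abs_of_pos hα,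
      ← ENNReal.ofReal_mul (by positivity), ← ENNReal.ofReal_mul (by positivity),
      rpow_sub_one hx.ne', rpow_sub_one hu.ne', rpow_neg hx.le]
    congr 1
    field_simp
  rw [setLIntegral_congr_fun measurableSet_Ioi hsubst,
    lintegral_const_mul' _ _ ENNReal.ofReal_ne_top,
    hlap.lintegral_rpow_neg_mul hα hf hnn (mul_pos hα hq), ← ENNReal.ofReal_mul (by positivity)]
  congr 1
  field_simp

theorem lintegral_rpow_mul_lintegral_condStable (hlap : HasStableLaplaceTransform α f)
    (hα : 0 < α) (hf : Measurable f) (hnn : ∀ x, 0 ≤ f x) {q ν : ℝ} (hq : 0 < q) (hν : 0 < ν) :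
    ∫⁻ t in Ioi 0, ∫⁻ u in Ioc 0 1,
        ENNReal.ofReal (t ^ (q - 1) * ((1 - u) ^ (ν - 1) * condStable α f t u)) =
      ENNReal.ofReal (Gamma q * Gamma ν / Gamma (ν + α * q)) := by
  have hαq : 0 < α * q := mul_pos hα hq
  have hmellin : ∀ u ∈ Ioc (0:ℝ) 1, ∫⁻ t in Ioi 0,
      ENNReal.ofReal (t ^ (q - 1) * ((1 - u) ^ (ν - 1) * condStable α f t u)) =
        ENNReal.ofReal (Gamma q / Gamma (α * q) * (u ^ (α * q - 1) * (1 - u) ^ (ν - 1))) := by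
    rintro u ⟨hu0, hu1⟩
    have h1u : 0 ≤ (1 - u) ^ (ν - 1) := rpow_nonneg (sub_nonneg.2 hu1) _
    simp_rw [mul_left_comm _ ((1 - u) ^ (ν - 1)), ENNReal.ofReal_mul h1u]
    rw [lintegral_const_mul' _ _ ENNReal.ofReal_ne_top,
      hlap.lintegral_rpow_mul_condStable hα hf hnn hq hu0, ← ENNReal.ofReal_mul h1u]
    ring_nf
  rw [lintegral_lintegral_swap (by simp only [condStable]; fun_prop),
    setLIntegral_congr_fun measurableSet_Ioc hmellin]
  refine lintegral_ofReal_eq_of_integral_eq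
    (ae_restrict_of_forall_mem measurableSet_Ioc fun u hu => ?_) ?_ ?_
  · have := hu.1
    have := sub_nonneg.2 hu.2
    have := Gamma_pos_of_pos hq
    have := Gamma_pos_of_pos hαq
    positivity
  · have := Gamma_pos_of_pos hq
    have := Gamma_pos_of_pos hν
    have := Gamma_pos_of_pos (add_pos hν hαq)
    positivity
  · rw [integral_const_mul, ← intervalIntegral.integral_of_le zero_le_one,
      integral_rpow_mul_one_sub_rpow hαq hν, add_comm (α * q) ν]
    field_simp [(Gamma_pos_of_pos hαq).ne']

theorem integral_rpow_mul_RL_condStable (hlap : HasStableLaplaceTransform α f)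
    (hα : 0 < α) (hf : Measurable f) (hnn : ∀ x, 0 ≤ f x) {q ν : ℝ} (hq : 0 < q) (hν : 0 < ν) :
    ∫ t in Ioi 0, t ^ (q - 1) * RL ν (condStable α f t) 1 = Gamma q / Gamma (ν + α * q) := by
  have hRL : ∀ t ∈ Ioi (0:ℝ), t ^ (q - 1) * RL ν (condStable α f t) 1 =
      (Gamma ν)⁻¹ * ∫ u in Ioc 0 1, t ^ (q - 1) * ((1 - u) ^ (ν - 1) * condStable α f t u) := by
    intro t _
    rw [RL, intervalIntegral.integral_of_le zero_le_one, integral_const_mul]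
    ring
  have hnonneg : 0 ≤ᵐ[(volume.restrict (Ioi 0)).prod (volume.restrict (Ioc 0 1))]
      Function.uncurry fun t u : ℝ => t ^ (q - 1) * ((1 - u) ^ (ν - 1) * condStable α f t u) := by
    rw [Measure.prod_restrict]
    refine ae_restrict_of_forall_mem (measurableSet_Ioi.prod measurableSet_Ioc) ?_
    rintro ⟨t, u⟩ ⟨ht, -, hu1⟩
    have := mem_Ioi.1 ht
    have := sub_nonneg.2 hu1
    have := hnn (u * t ^ (-(1 / α)))
    simp only [Function.uncurry_apply_pair, Pi.zero_apply, condStable]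
    positivity
  rw [setIntegral_congr_fun measurableSet_Ioi hRL, integral_const_mul,
    integral_integral_eq_of_lintegral_lintegral_eq (by simp only [condStable]; fun_prop) hnonneg
      (by have := Gamma_pos_of_pos hq; have := Gamma_pos_of_pos hν;
          have := Gamma_pos_of_pos (add_pos hν (mul_pos hα hq)); positivity)
      (hlap.lintegral_rpow_mul_lintegral_condStable hα hf hnn hq hν)]
  field_simp [(Gamma_pos_of_pos hν).ne']

end HasStableLaplaceTransform

theorem stmt_11_general (α : ℝ) (hα0 : 0 < α)
    (f : ℝ → ℝ) (hmeas : Measurable f) (hnn : ∀ x, 0 ≤ f x)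
    (hlap : ∀ s > (0:ℝ),
      (∫ x in Set.Ioi (0:ℝ), Real.exp (-(s * x)) * f x) = Real.exp (-(s ^ α)))
    (γ β θ : ℝ) (hβ : α * γ < β) (hθ : -(α * γ) < θ) :
    ∀ n : ℕ,
      (∫ t in Set.Ioi (0:ℝ),
          (t : ℝ) ^ n * (Real.Gamma (β + θ) / Real.Gamma (γ + θ / α) *
            (RL (β - α * γ) (condStable α f t) 1 * t ^ (γ + θ / α - 1))))
        = Real.Gamma (β + θ) * Real.Gamma (γ + n + θ / α) /
            (Real.Gamma (γ + θ / α) * Real.Gamma (β + α * n + θ)) := by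
  intro n
  have hθα : -γ < θ / α := by rw [lt_div_iff₀ hα0]; linarith
  have hq : 0 < γ + n + θ / α := by linarith [(Nat.cast_nonneg n : (0:ℝ) ≤ n)]
  have hmoment := HasStableLaplaceTransform.integral_rpow_mul_RL_condStable hlap hα0 hmeas hnn hq
    (sub_pos.2 hβ)
  rw [show β - α * γ + α * (γ + n + θ / α) = β + α * n + θ by field_simp; ring] at hmoment
  have hpow : ∀ t ∈ Ioi (0:ℝ), (t : ℝ) ^ n * (Gamma (β + θ) / Gamma (γ + θ / α) *
      (RL (β - α * γ) (condStable α f t) 1 * t ^ (γ + θ / α - 1))) =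
        Gamma (β + θ) / Gamma (γ + θ / α) *
          (t ^ (γ + n + θ / α - 1) * RL (β - α * γ) (condStable α f t) 1) := by
    intro t (ht : 0 < t)
    rw [show γ + n + θ / α - 1 = n + (γ + θ / α - 1) by ring, rpow_add ht, rpow_natCast]
    ring
  rw [setIntegral_congr_fun measurableSet_Ioi hpow, integral_const_mul, hmoment]
  field_simp

theorem stmt_11 (α : ℝ) (hα0 : 0 < α) (hα1 : α < 1)
    (f : ℝ → ℝ) (hmeas : Measurable f) (hnn : ∀ x, 0 ≤ f x)
    (hint : Integrable f) (hsupp : ∀ x < (0:ℝ), f x = 0)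
    (hlap : ∀ s > (0:ℝ),
      (∫ x in Set.Ioi (0:ℝ), Real.exp (-(s * x)) * f x) = Real.exp (-(s ^ α)))
    (γ β θ : ℝ) (hγ : 0 < γ) (hβ : α * γ < β) (hθ : -(α * γ) < θ) :
    ∀ n : ℕ,
      (∫ t in Set.Ioi (0:ℝ),
          (t : ℝ) ^ n * (Real.Gamma (β + θ) / Real.Gamma (γ + θ / α) *
            (RL (β - α * γ) (condStable α f t) 1 * t ^ (γ + θ / α - 1))))
        = Real.Gamma (β + θ) * Real.Gamma (γ + n + θ / α) /
            (Real.Gamma (γ + θ / α) * Real.Gamma (β + α * n + θ)) :=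
  stmt_11_general α hα0 f hmeas hnn hlap γ β θ hβ hθ
end

section
/- Let 0 < α < 1, let f_α be the one-sided stable density, let θ > −α, and let P_{α,θ} be the generalised Mittag-Leffler probability measure with density (Γ(1 + θ)/(α Γ(1 + θ/α))) f_α(t^{−1/α}) t^{(θ−1)/α−1} on (0, ∞). Then for every natural number n, ∫_0^∞ t^n dP_{α,θ}(t) = Γ(1 + θ) Γ(1 + n + θ/α) / (Γ(1 + θ/α) Γ(1 + α n + θ)). -/
open MeasureTheory Real

/-!
Writing `Γ(a) x^{-a} = ∫₀^∞ s^{a-1} e^{-sx} ds` and exchanging integrals (Tonelli, the integrand being nonnegative) turns the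
Mellin transform of a nonnegative function into the Mellin transform of its Laplace transform.
Applied to `x f(x)`, whose Laplace transform is `-(d/ds) e^{-s^α} = α s^{α-1} e^{-s^α}`, this gives
`∫₀^∞ x^{-p} f(x) dx = Γ(1 + p/α) / Γ(1 + p)` for every `p > -α`. The substitution `t = x^{-α}`
turns the `n`-th moment of the Mittag-Leffler law into this integral with `p = αn + θ`.
-/

open Set Filter

noncomputable def laplace (g : ℝ → ℝ) (s : ℝ) : ℝ :=
  ∫ x in Ioi 0, exp (-(s * x)) * g x

lemma norm_exp_neg_mul_mul_le {s t x : ℝ} (hs : 0 < s) (ht : s / 2 ≤ t) (hx : 0 ≤ x) (y : ℝ) :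
    ‖exp (-(t * x)) * (x * y)‖ ≤ 4 / s * ‖exp (-(s / 4 * x)) * y‖ := by
  have hlin : s / 4 * x ≤ exp (s / 4 * x) := by linarith [add_one_le_exp (s / 4 * x)]
  have hx_exp : x * exp (-(t * x)) ≤ 4 / s * exp (-(s / 4 * x)) :=
    calc x * exp (-(t * x)) ≤ x * exp (-(s / 2 * x)) := by gcongr
      _ = 4 / s * (s / 4 * x) * exp (-(s / 2 * x)) := by field_simp
      _ ≤ 4 / s * exp (s / 4 * x) * exp (-(s / 2 * x)) := by gcongr
      _ = 4 / s * exp (-(s / 4 * x)) := by rw [mul_assoc, ← exp_add]; ring_nf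
  rw [norm_mul, norm_mul, norm_mul, norm_of_nonneg hx, norm_of_nonneg (exp_pos _).le,
    norm_of_nonneg (exp_pos _).le]
  calc exp (-(t * x)) * (x * ‖y‖) = x * exp (-(t * x)) * ‖y‖ := by ring
    _ ≤ 4 / s * exp (-(s / 4 * x)) * ‖y‖ := by gcongr
    _ = 4 / s * (exp (-(s / 4 * x)) * ‖y‖) := by ring

section Laplace

variable {g : ℝ → ℝ} (hg : ∀ t > 0, IntegrableOn (fun x => exp (-(t * x)) * g x) (Ioi 0))
include hg

lemma integrableOn_exp_neg_mul_mul_id {s : ℝ} (hs : 0 < s) :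
    IntegrableOn (fun x => exp (-(s * x)) * (x * g x)) (Ioi 0) := by
  refine ((hg (s / 4) (by positivity)).norm.const_mul (4 / s)).mono' ?_ ?_
  · exact (continuous_id.aestronglyMeasurable.mul (hg s hs).aestronglyMeasurable).congr
      (.of_forall fun x => by simp only [Pi.mul_apply, id]; ring)
  · filter_upwards [ae_restrict_mem measurableSet_Ioi] with x (hx : 0 < x)
    exact norm_exp_neg_mul_mul_le hs (by linarith) hx.le _

lemma hasDerivAt_laplace {s : ℝ} (hs : 0 < s) :
    HasDerivAt (laplace g) (-laplace (fun x => x * g x) s) s := by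
  have hball : Metric.ball s (s / 2) ⊆ Ioi (s / 2) := fun t ht => by
    rw [Metric.mem_ball, Real.dist_eq, abs_lt] at ht
    exact show s / 2 < t by linarith
  have key := hasDerivAt_integral_of_dominated_loc_of_deriv_le
    (F := fun t x => exp (-(t * x)) * g x)
    (F' := fun t x => -(exp (-(t * x)) * (x * g x)))
    (bound := fun x => 4 / s * ‖exp (-(s / 4 * x)) * g x‖)
    (Metric.ball_mem_nhds s (half_pos hs))
    (eventually_of_mem (Ioi_mem_nhds hs) fun t ht => (hg t ht).aestronglyMeasurable)
    (hg s hs) (integrableOn_exp_neg_mul_mul_id hg hs).neg.aestronglyMeasurable ?_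
    ((hg (s / 4) (by positivity)).norm.const_mul _) ?_
  · rw [laplace, ← integral_neg]
    exact key.2
  · filter_upwards [ae_restrict_mem measurableSet_Ioi] with x (hx : 0 < x) t ht
    rw [norm_neg]
    exact norm_exp_neg_mul_mul_le hs (hball ht).le hx.le _
  · refine .of_forall fun x t _ => ?_
    have := ((hasDerivAt_mul_const (x := t) x).neg.exp).mul_const (g x)
    exact this.congr_deriv (by simp only [Pi.neg_apply]; ring)

lemma Gamma_mul_integral_rpow_neg_mul (hg0 : ∀ x ∈ Ioi (0 : ℝ), 0 ≤ g x) {a : ℝ} (ha : 0 < a)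
    (hL : IntegrableOn (fun s => s ^ (a - 1) * laplace g s) (Ioi 0)) :
    Gamma a * ∫ x in Ioi 0, x ^ (-a) * g x = ∫ s in Ioi 0, s ^ (a - 1) * laplace g s := by
  set μ := volume.restrict (Ioi (0 : ℝ))
  set K : ℝ → ℝ → ℝ := fun s x => s ^ (a - 1) * (exp (-(s * x)) * g x)
  have hg_meas : AEStronglyMeasurable g μ :=
    (continuous_exp.aestronglyMeasurable.mul (hg 1 one_pos).aestronglyMeasurable).congr
      (.of_forall fun x => by simp [← mul_assoc, ← exp_add])
  have hK_meas : AEStronglyMeasurable (Function.uncurry K) (μ.prod μ) := by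
    have hm : Measurable fun p : ℝ × ℝ => p.1 ^ (a - 1) * exp (-(p.1 * p.2)) := by fun_prop
    exact (hm.aestronglyMeasurable.mul hg_meas.comp_snd).congr
      (.of_forall fun p => mul_assoc _ _ _)
  have hK_inner : ∀ s, ∫ x, K s x ∂μ = s ^ (a - 1) * laplace g s := fun s =>
    integral_const_mul _ _
  have hK_int : Integrable (Function.uncurry K) (μ.prod μ) := by
    refine (integrable_prod_iff hK_meas).2 ⟨?_, hL.congr ?_⟩
    · filter_upwards [ae_restrict_mem measurableSet_Ioi] with s hs
      exact (hg s hs).const_mul (s ^ (a - 1))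
    · filter_upwards [ae_restrict_mem measurableSet_Ioi] with s (hs : 0 < s)
      rw [← hK_inner]
      refine integral_congr_ae ?_
      filter_upwards [ae_restrict_mem measurableSet_Ioi] with x hx
      exact (norm_of_nonneg (by positivity [hg0 x hx])).symm
  have hK_outer : ∀ x ∈ Ioi (0 : ℝ), ∫ s, K s x ∂μ = Gamma a * (x ^ (-a) * g x) := by
    intro x (hx : 0 < x)
    simp_rw [K, ← mul_assoc, mul_comm _ x]
    rw [integral_mul_const, integral_rpow_mul_exp_neg_mul_Ioi ha hx, one_div,
      inv_rpow hx.le, ← rpow_neg hx.le]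
    ring
  calc Gamma a * ∫ x in Ioi 0, x ^ (-a) * g x = ∫ x, ∫ s, K s x ∂μ ∂μ := by
        rw [← integral_const_mul]
        exact (setIntegral_congr_fun measurableSet_Ioi hK_outer).symm
    _ = ∫ s, ∫ x, K s x ∂μ ∂μ := (integral_integral_swap hK_int).symm
    _ = ∫ s in Ioi 0, s ^ (a - 1) * laplace g s := by simp_rw [hK_inner]; rfl

end Laplace

lemma integrableOn_of_laplace_eq_exp_neg_rpow {α : ℝ} {f : ℝ → ℝ}
    (hf : ∀ s > 0, laplace f s = exp (-s ^ α)) :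
    ∀ t > 0, IntegrableOn (fun x => exp (-(t * x)) * f x) (Ioi 0) := fun t ht =>
  .of_integral_ne_zero ((hf t ht).trans_ne (exp_pos _).ne')

lemma laplace_mul_id_of_laplace_eq_exp_neg_rpow {α : ℝ} {f : ℝ → ℝ}
    (hf : ∀ s > 0, laplace f s = exp (-s ^ α)) {s : ℝ} (hs : 0 < s) :
    laplace (fun x => x * f x) s = α * s ^ (α - 1) * exp (-s ^ α) := by
  have hf_int := integrableOn_of_laplace_eq_exp_neg_rpow hf
  have hderiv : HasDerivAt (fun t => exp (-t ^ α)) (-laplace (fun x => x * f x) s) s :=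
    (hasDerivAt_laplace hf_int hs).congr_of_eventuallyEq
      (eventually_of_mem (Ioi_mem_nhds hs) fun t ht => (hf t ht).symm)
  have hderiv' := ((hasDerivAt_rpow_const (p := α) (Or.inl hs.ne')).neg).exp
  have h := hderiv.unique hderiv'
  simp only [Pi.neg_apply] at h
  linear_combination -h

theorem integral_rpow_neg_mul_of_laplace_eq_exp_neg_rpow {α : ℝ} (hα0 : 0 < α) (hα1 : α < 1)
    {f : ℝ → ℝ} (hf0 : ∀ x ∈ Ioi (0 : ℝ), 0 ≤ f x) (hf : ∀ s > 0, laplace f s = exp (-s ^ α))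
    {p : ℝ} (hp : -α < p) :
    ∫ x in Ioi 0, x ^ (-p) * f x = Gamma (1 + p / α) / Gamma (1 + p) := by
  have hf_int := integrableOn_of_laplace_eq_exp_neg_rpow hf
  have hp1 : 0 < 1 + p := by linarith
  have hlap : ∀ s ∈ Ioi (0 : ℝ), s ^ (1 + p - 1) * laplace (fun x => x * f x) s
      = α * (s ^ (p + α - 1) * exp (-s ^ α)) := fun s (hs : 0 < s) => by
    rw [laplace_mul_id_of_laplace_eq_exp_neg_rpow hf hs, show p + α - 1 = (1 + p - 1) + (α - 1)
      by ring, rpow_add hs]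
    ring
  have key := Gamma_mul_integral_rpow_neg_mul (g := fun x => x * f x)
    (fun t ht => integrableOn_exp_neg_mul_mul_id hf_int ht)
    (fun x (hx : 0 < x) => mul_nonneg hx.le (hf0 x hx)) hp1
    (IntegrableOn.congr_fun ((integrableOn_rpow_mul_exp_neg_rpow (by linarith) hα0).const_mul α)
      (fun s hs => (hlap s hs).symm) measurableSet_Ioi)
  rw [setIntegral_congr_fun measurableSet_Ioi hlap, integral_const_mul,
    integral_rpow_mul_exp_neg_rpow hα0 (by linarith),
    setIntegral_congr_fun measurableSet_Ioi fun x (hx : 0 < x) => by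
      rw [← mul_assoc, ← rpow_add_one hx.ne', show -(1 + p) + 1 = -p by ring]] at key
  rw [eq_div_iff (Gamma_pos_of_pos hp1).ne', mul_comm, key, ← mul_assoc, mul_one_div_cancel hα0.ne',
    one_mul]
  congr 1
  field_simp
  ring

lemma integral_rpow_mul_comp_rpow_neg_inv {α : ℝ} (hα : 0 < α) (q θ : ℝ) (f : ℝ → ℝ) :
    ∫ t in Ioi 0, t ^ q * (f (t ^ (-(1 / α))) * t ^ ((θ - 1) / α - 1))
      = α * ∫ x in Ioi 0, x ^ (-(α * q + θ)) * f x := by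
  rw [← integral_comp_rpow_Ioi _ (neg_ne_zero.mpr hα.ne'), ← integral_const_mul]
  refine setIntegral_congr_fun measurableSet_Ioi fun x (hx : 0 < x) => ?_
  simp only [smul_eq_mul, abs_neg, abs_of_pos hα]
  rw [← rpow_mul hx.le, ← rpow_mul hx.le, ← rpow_mul hx.le,
    show -α * -(1 / α) = 1 by field_simp, rpow_one]
  have hexp : x ^ (-α - 1) * x ^ (-α * q) * x ^ (-α * ((θ - 1) / α - 1))
      = x ^ (-(α * q + θ)) := by
    rw [← rpow_add hx, ← rpow_add hx]
    congr 1
    field_simp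
    ring
  rw [← hexp]
  ring

theorem stmt_16_general (α : ℝ) (hα0 : 0 < α) (hα1 : α < 1)
    (f : ℝ → ℝ) (hnn : ∀ x, 0 ≤ f x)
    (hlap : ∀ s > (0:ℝ),
      (∫ x in Set.Ioi (0:ℝ), Real.exp (-(s * x)) * f x) = Real.exp (-(s ^ α)))
    (θ : ℝ) (hθ : -α < θ) :
    ∀ n : ℕ,
      (∫ t in Set.Ioi (0:ℝ),
          (t : ℝ) ^ n * (Real.Gamma (1 + θ) / (α * Real.Gamma (1 + θ / α)) *
            (f (t ^ (-(1/α))) * t ^ ((θ - 1) / α - 1))))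
        = Real.Gamma (1 + θ) * Real.Gamma (1 + n + θ / α) /
            (Real.Gamma (1 + θ / α) * Real.Gamma (1 + α * n + θ)) := by
  intro n
  have hp : -α < α * n + θ := by nlinarith [mul_nonneg hα0.le n.cast_nonneg]
  have hΓ : Gamma (1 + θ / α) ≠ 0 := by
    refine (Gamma_pos_of_pos ?_).ne'
    rw [← neg_lt_iff_pos_add', neg_lt, ← neg_div, div_lt_one hα0]
    exact neg_lt.mp hθ
  simp_rw [mul_left_comm _ (Gamma (1 + θ) / _), ← rpow_natCast]
  rw [integral_const_mul, integral_rpow_mul_comp_rpow_neg_inv hα0,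
    integral_rpow_neg_mul_of_laplace_eq_exp_neg_rpow hα0 hα1 (fun x _ => hnn x) hlap hp,
    show 1 + (α * n + θ) / α = 1 + n + θ / α by field_simp; ring, ← add_assoc]
  field_simp

theorem stmt_16 (α : ℝ) (hα0 : 0 < α) (hα1 : α < 1)
    (f : ℝ → ℝ) (hmeas : Measurable f) (hnn : ∀ x, 0 ≤ f x)
    (hint : Integrable f) (hsupp : ∀ x < (0:ℝ), f x = 0)
    (hlap : ∀ s > (0:ℝ),
      (∫ x in Set.Ioi (0:ℝ), Real.exp (-(s * x)) * f x) = Real.exp (-(s ^ α)))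
    (θ : ℝ) (hθ : -α < θ) :
    ∀ n : ℕ,
      (∫ t in Set.Ioi (0:ℝ),
          (t : ℝ) ^ n * (Real.Gamma (1 + θ) / (α * Real.Gamma (1 + θ / α)) *
            (f (t ^ (-(1/α))) * t ^ ((θ - 1) / α - 1))))
        = Real.Gamma (1 + θ) * Real.Gamma (1 + n + θ / α) /
            (Real.Gamma (1 + θ / α) * Real.Gamma (1 + α * n + θ)) :=
  stmt_16_general α hα0 hα1 f hnn hlap θ hθ
end
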